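/- arXiv:0705.2933 — 8 statements merged into one kernel-verified Lean document; each statement's English description precedes it below -/
import Mathlib

section
/- Let B be a commutative unital C*-algebra and E a Hilbert C*-module over B. If b ∈ B satisfies 0 ≤ b ≤ 1, and ψ₁, ψ₂ ∈ E satisfy ‖ψ₁‖ ≤ 1 and ‖ψ₂‖ ≤ 1, then ‖ψ₁ • b + ψ₂ • (1 − b)‖ ≤ 1. -/
/-!
Since `B` is commutative, `ψ = ψ₁ b + ψ₂ c` has
`⟪ψ, ψ⟫ = b²⟪ψ₁, ψ₁⟫ + bc(⟪ψ₁, ψ₂⟫ + ⟪ψ₂, ψ₁⟫) + c²⟪ψ₂, ψ₂⟫`, and positivity of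
`⟪ψ₁ - ψ₂, ψ₁ - ψ₂⟫` bounds the cross term by `⟪ψ₁, ψ₁⟫ + ⟪ψ₂, ψ₂⟫`. For `b, c ≥ 0` with `b + c = 1`
this gives `⟪ψ, ψ⟫ ≤ b⟪ψ₁, ψ₁⟫ + c⟪ψ₂, ψ₂⟫ ≤ 1`, and a positive element of a C*-algebra has norm at
most one exactly when it is at most one.
-/

open scoped RightActions

/-- The December 2024 Mathlib `CStarModule` (right Hilbert C*-module, action of `Aᵐᵒᵖ`),
restored under a new name since Mathlib's `CStarModule` now means a left module. -/
class RightCStarModule (A E : Type*) [NonUnitalSemiring A] [StarRing A] [Module ℂ A]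
    [AddCommGroup E] [Module ℂ E] [PartialOrder A] [SMul Aᵐᵒᵖ E] [Norm A] [Norm E]
    extends Inner A E where
  inner_add_right {x} {y} {z} : inner x (y + z) = inner x y + inner x z
  inner_self_nonneg {x} : 0 ≤ inner x x
  inner_self {x} : inner x x = 0 ↔ x = 0
  inner_op_smul_right {a : A} {x y : E} : inner x (y <• a) = inner x y * a
  inner_smul_right_complex {z : ℂ} {x} {y} : inner x (z • y) = z • inner x y
  star_inner x y : star (inner x y) = inner y x
  norm_eq_sqrt_norm_inner_self x : ‖x‖ = √‖inner x x‖

namespace RightCStarModule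

section Ring

variable {A E : Type*} [NonUnitalRing A] [StarRing A] [Module ℂ A] [PartialOrder A] [Norm A]
    [AddCommGroup E] [Module ℂ E] [SMul Aᵐᵒᵖ E] [Norm E] [RightCStarModule A E]

lemma inner_add_left {x y z : E} : inner A (x + y) z = inner A x z + inner A y z := by
  rw [← star_inner, inner_add_right, star_add, star_inner, star_inner]

lemma inner_op_smul_left {a : A} {x y : E} : inner A (x <• a) y = star a * inner A x y := by
  rw [← star_inner, inner_op_smul_right, star_mul, star_inner]

lemma inner_neg_right {x y : E} : inner A x (-y) = -inner A x y := by
  simpa only [neg_one_smul] using inner_smul_right_complex (A := A) (z := -1) (x := x) (y := y)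

lemma inner_sub_right {x y z : E} : inner A x (y - z) = inner A x y - inner A x z := by
  rw [sub_eq_add_neg, inner_add_right, inner_neg_right, ← sub_eq_add_neg]

lemma inner_sub_left {x y z : E} : inner A (x - y) z = inner A x z - inner A y z := by
  rw [← star_inner, inner_sub_right, star_sub, star_inner, star_inner]

lemma inner_add_inner_le_inner_self_add_inner_self [StarOrderedRing A] (x y : E) :
    inner A x y + inner A y x ≤ inner A x x + inner A y y := by
  have h := inner_self_nonneg (A := A) (x := x - y)
  rw [inner_sub_left, inner_sub_right, inner_sub_right] at h
  rw [← sub_nonneg]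
  convert h using 1
  abel

end Ring

section CommRing

variable {A E : Type*} [CommRing A] [StarRing A] [Module ℂ A] [PartialOrder A] [Norm A]
    [AddCommGroup E] [Module ℂ E] [SMul Aᵐᵒᵖ E] [Norm E] [RightCStarModule A E]

lemma inner_self_op_smul_add_op_smul {b c : A} (hb : IsSelfAdjoint b) (hc : IsSelfAdjoint c)
    (x y : E) :
    inner A (x <• b + y <• c) (x <• b + y <• c) =
      b * b * inner A x x + b * c * (inner A x y + inner A y x) + c * c * inner A y y := by
  simp only [inner_add_left, inner_add_right, inner_op_smul_left, inner_op_smul_right,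
    hb.star_eq, hc.star_eq]
  ring

lemma inner_self_op_smul_add_op_smul_le [StarOrderedRing A] {b c : A} (hb : 0 ≤ b) (hc : 0 ≤ c)
    (x y : E) :
    inner A (x <• b + y <• c) (x <• b + y <• c) ≤
      b * (b + c) * inner A x x + c * (b + c) * inner A y y := by
  rw [inner_self_op_smul_add_op_smul (.of_nonneg hb) (.of_nonneg hc)]
  calc _ ≤ b * b * inner A x x + b * c * (inner A x x + inner A y y) + c * c * inner A y y := by
        gcongr _ + _ * ?_ + _
        exact inner_add_inner_le_inner_self_add_inner_self x y
    _ = b * (b + c) * inner A x x + c * (b + c) * inner A y y := by ring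

end CommRing

lemma norm_le_one_iff_inner_self_le_one {A E : Type*} [CStarAlgebra A] [PartialOrder A]
    [StarOrderedRing A] [AddCommGroup E] [Module ℂ E] [SMul Aᵐᵒᵖ E] [Norm E]
    [RightCStarModule A E] {x : E} : ‖x‖ ≤ 1 ↔ inner A x x ≤ 1 := by
  rw [norm_eq_sqrt_norm_inner_self (A := A), Real.sqrt_le_one,
    CStarAlgebra.norm_le_one_iff_of_nonneg _ inner_self_nonneg]

end RightCStarModule

open RightCStarModule in
/-- **Local convexity of Hilbert C*-modules.**
Let `B` be a commutative unital C*-algebra and `E` a Hilbert C*-module over `B`.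
If `b ∈ B` satisfies `0 ≤ b ≤ 1`, and `ψ₁, ψ₂ ∈ E` have norm at most one, then
`‖ψ₁ • b + ψ₂ • (1 - b)‖ ≤ 1`. -/
theorem cstarModule_convex_combination {B E : Type*} [CommCStarAlgebra B]
    [PartialOrder B] [StarOrderedRing B]
    [AddCommGroup E] [Module ℂ E] [SMul Bᵐᵒᵖ E] [Norm E] [RightCStarModule B E]
    (b : B) (hb0 : 0 ≤ b) (hb1 : b ≤ 1)
    (ψ₁ ψ₂ : E) (hψ₁ : ‖ψ₁‖ ≤ 1) (hψ₂ : ‖ψ₂‖ ≤ 1) :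
    ‖ψ₁ <• b + ψ₂ <• (1 - b)‖ ≤ 1 := by
  rw [norm_le_one_iff_inner_self_le_one (A := B)] at hψ₁ hψ₂ ⊢
  have hc0 : 0 ≤ 1 - b := sub_nonneg.mpr hb1
  calc _ ≤ b * (b + (1 - b)) * inner B ψ₁ ψ₁ + (1 - b) * (b + (1 - b)) * inner B ψ₂ ψ₂ :=
        inner_self_op_smul_add_op_smul_le hb0 hc0 ψ₁ ψ₂
    _ ≤ b * (b + (1 - b)) * 1 + (1 - b) * (b + (1 - b)) * 1 := by gcongr
    _ = 1 := by ring
end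

section
/- Let B be a unital C*-algebra, A ⊆ B a unital C*-subalgebra, and ρ, ρ′ : A → A unital *-homomorphisms. Suppose (ψ_L)_{L ∈ Λ} and (φ_M)_{M ∈ Μ} are finite families in B satisfying Σ_L ψ_L ψ_L* = 1, Σ_M φ_M φ_M* = 1, and ψ_L a = ρ′(a) ψ_L, φ_M a = ρ(a) φ_M for all a ∈ A and all L, M. Then an element t ∈ B satisfies t ρ(a) = ρ′(a) t for all a ∈ A if and only if t = Σ_{L, M} ψ_L z_{LM} φ_M* for some family of elements z_{LM} ∈ A′ ∩ B. In the forward direction one may take z_{LM} := ψ_L* t φ_M, and each such element lies in A′ ∩ B. -/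
/-- **Matrix decomposition of intertwiners.**
Let `B` be a unital C*-algebra, `A ⊆ B` a unital C*-subalgebra, and
`ρ, ρ′ : A → A` unital *-homomorphisms.  Suppose `(ψ_L)` and `(φ_M)` are finite
families in `B` with `Σ_L ψ_L ψ_L* = 1`, `Σ_M φ_M φ_M* = 1`, and
`ψ_L a = ρ′(a) ψ_L`, `φ_M a = ρ(a) φ_M` for all `a ∈ A`.  Then `t ∈ B` satisfies
`t ρ(a) = ρ′(a) t` for all `a ∈ A` iff `t = Σ_{L,M} ψ_L z_{LM} φ_M*` for some
family `z_{LM} ∈ A′ ∩ B`; in the forward direction one may take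
`z_{LM} := ψ_L* t φ_M`, and each such element lies in `A′ ∩ B`. -/
theorem intertwiner_matrix_decomposition {B : Type*} [CStarAlgebra B]
    (A : StarSubalgebra ℂ B) (hA : IsClosed (A : Set B))
    (ρ ρ' : A →⋆ₐ[ℂ] A)
    {Λ Μ : Type*} [Fintype Λ] [Fintype Μ]
    (ψ : Λ → B) (φ : Μ → B)
    (hψ1 : ∑ L, ψ L * star (ψ L) = 1)
    (hφ1 : ∑ M, φ M * star (φ M) = 1)
    (hψ : ∀ (a : A) (L : Λ), ψ L * (a : B) = (ρ' a : B) * ψ L)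
    (hφ : ∀ (a : A) (M : Μ), φ M * (a : B) = (ρ a : B) * φ M)
    (t : B) :
    ((∀ a : A, t * (ρ a : B) = (ρ' a : B) * t) ↔
      ∃ z : Λ → Μ → B, (∀ L M, ∀ a ∈ A, z L M * a = a * z L M) ∧
        t = ∑ L, ∑ M, ψ L * z L M * star (φ M)) ∧
    ((∀ a : A, t * (ρ a : B) = (ρ' a : B) * t) →
      (∀ L M, ∀ a ∈ A, (star (ψ L) * t * φ M) * a = a * (star (ψ L) * t * φ M)) ∧
        t = ∑ L, ∑ M, ψ L * (star (ψ L) * t * φ M) * star (φ M)) := by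
  -- adjoint versions of the intertwining relations
  have hψ' : ∀ (a : A) (L : Λ), (a : B) * star (ψ L) = star (ψ L) * (ρ' a : B) := by
    intro a L
    have h := congrArg star (hψ (star a) L)
    simpa [star_mul, mul_assoc, map_star] using h
  have hφ' : ∀ (a : A) (M : Μ), (a : B) * star (φ M) = star (φ M) * (ρ a : B) := by
    intro a M
    have h := congrArg star (hφ (star a) M)
    simpa [star_mul, mul_assoc, map_star] using h
  -- forward direction: commutation of the matrix coefficients
  have hcomm : (∀ a : A, t * (ρ a : B) = (ρ' a : B) * t) →
      ∀ L M, ∀ a ∈ A, (star (ψ L) * t * φ M) * a = a * (star (ψ L) * t * φ M) := by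
    intro h L M a ha
    calc (star (ψ L) * t * φ M) * a
        = star (ψ L) * t * (φ M * (⟨a, ha⟩ : A)) := by noncomm_ring
      _ = star (ψ L) * (t * (ρ ⟨a, ha⟩ : B)) * φ M := by rw [hφ ⟨a, ha⟩ M]; noncomm_ring
      _ = star (ψ L) * ((ρ' ⟨a, ha⟩ : B) * t) * φ M := by rw [h ⟨a, ha⟩]
      _ = ((⟨a, ha⟩ : A) : B) * star (ψ L) * t * φ M := by rw [hψ' ⟨a, ha⟩ L]; noncomm_ring
      _ = a * (star (ψ L) * t * φ M) := by noncomm_ring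
  -- forward direction: the decomposition
  have hdec : t = ∑ L, ∑ M, ψ L * (star (ψ L) * t * φ M) * star (φ M) := by
    calc t = (∑ L, ψ L * star (ψ L)) * t * (∑ M, φ M * star (φ M)) := by
            rw [hψ1, hφ1, one_mul, mul_one]
      _ = ∑ L, ∑ M, ψ L * (star (ψ L) * t * φ M) * star (φ M) := by
            rw [Finset.sum_mul, Finset.sum_mul]
            refine Finset.sum_congr rfl fun L _ => ?_
            rw [Finset.mul_sum]
            exact Finset.sum_congr rfl fun M _ => by noncomm_ring
  refine ⟨⟨fun h => ⟨fun L M => star (ψ L) * t * φ M, hcomm h, hdec⟩, ?_⟩,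
    fun h => ⟨hcomm h, hdec⟩⟩
  rintro ⟨z, hz, rfl⟩ a
  rw [Finset.sum_mul, Finset.mul_sum]
  refine Finset.sum_congr rfl fun L _ => ?_
  rw [Finset.sum_mul, Finset.mul_sum]
  refine Finset.sum_congr rfl fun M _ => ?_
  calc ψ L * z L M * star (φ M) * (ρ a : B)
      = ψ L * (z L M * (a : B)) * star (φ M) := by rw [mul_assoc (ψ L * z L M), ← hφ' a M]; noncomm_ring
    _ = ψ L * ((a : B) * z L M) * star (φ M) := by rw [hz L M a a.2]
    _ = (ρ' a : B) * (ψ L * z L M * star (φ M)) := by rw [← mul_assoc (ψ L), hψ a L]; noncomm_ring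
end

section
/- Let B be a unital C*-algebra, ψ₁, …, ψ_d a Cuntz family of order d in B with canonical endomorphism σ, and r ≥ 0. For a permutation p of {1, …, r}, let Sp denote the shifted permutation of {1, …, r+1} defined by (Sp)(1) := 1 and (Sp)(n) := 1 + p(n − 1) for 2 ≤ n ≤ r + 1. Then σ(θ(p)) = θ(Sp). -/
/-- A Cuntz family of order `d` in a unital C*-algebra `B`:  a family
`ψ₁, …, ψ_d` with `ψᵢ* ψⱼ = δᵢⱼ 1` and `Σᵢ ψᵢ ψᵢ* = 1`. -/
def IsCuntzFamily {B : Type*} [CStarAlgebra B] {d : ℕ} (ψ : Fin d → B) : Prop :=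
  (∀ i j, star (ψ i) * ψ j = if i = j then (1 : B) else 0) ∧
    ∑ i, ψ i * star (ψ i) = 1

/-- The canonical endomorphism `σ(b) := Σᵢ ψᵢ b ψᵢ*` of a Cuntz family. -/
def cuntzEndo {B : Type*} [CStarAlgebra B] {d : ℕ} (ψ : Fin d → B) (b : B) : B :=
  ∑ i, ψ i * b * star (ψ i)

/-- The word `ψ_J := ψ_{j₁} ⋯ ψ_{j_r}` associated with a multi-index
`J = (j₁, …, j_r) ∈ {1, …, d}^r`. -/
def cuntzWord {B : Type*} [CStarAlgebra B] {d : ℕ} (ψ : Fin d → B) {r : ℕ}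
    (J : Fin r → Fin d) : B :=
  (List.ofFn fun k => ψ (J k)).prod

/-- The permutation operator
`θ(p) := Σ_{l₁,…,l_r} ψ_{l_{p(1)}} ⋯ ψ_{l_{p(r)}} ψ_{l_r}* ⋯ ψ_{l₁}*`. -/
def cuntzPermOp {B : Type*} [CStarAlgebra B] {d : ℕ} (ψ : Fin d → B) {r : ℕ}
    (p : Equiv.Perm (Fin r)) : B :=
  ∑ l : Fin r → Fin d, cuntzWord ψ (l ∘ p) * star (cuntzWord ψ l)

/-- **Shift relation for permutation operators.**
Let `ψ₁, …, ψ_d` be a Cuntz family of order `d` in a unital C*-algebra `B` with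
canonical endomorphism `σ`, and `r ≥ 0`.  For a permutation `p` of `{1, …, r}`,
let `Sp` denote the shifted permutation of `{1, …, r+1}`, fixing the first letter
and acting by `p` on the remaining ones (in zero-based indexing: `Sp 0 = 0` and
`Sp (i+1) = p(i) + 1`).  Then `σ(θ(p)) = θ(Sp)`. -/
theorem cuntzEndo_permOp_shift {B : Type*} [CStarAlgebra B]
    {d : ℕ} (ψ : Fin d → B) (hψ : IsCuntzFamily ψ)
    {r : ℕ} (p : Equiv.Perm (Fin r))
    (Sp : Equiv.Perm (Fin (r + 1)))
    (hSp0 : Sp 0 = 0) (hSp : ∀ i : Fin r, Sp i.succ = (p i).succ) :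
    cuntzEndo ψ (cuntzPermOp ψ p) = cuntzPermOp ψ Sp := by
  have hcons : ∀ (i : Fin d) (l : Fin r → Fin d),
      cuntzWord ψ (Fin.cons i l) = ψ i * cuntzWord ψ l := by
    intro i l
    simp [cuntzWord, List.ofFn_succ, Fin.cons_zero, Fin.cons_succ]
  have key : ∀ (i : Fin d) (l : Fin r → Fin d),
      (Fin.cons i l : Fin (r + 1) → Fin d) ∘ Sp = Fin.cons i (l ∘ p) := by
    intro i l
    funext k
    induction k using Fin.cases with
    | zero => simp [hSp0]
    | succ k => simp [hSp k]
  rw [cuntzEndo, cuntzPermOp, cuntzPermOp,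
    ← Fintype.sum_equiv (Fin.consEquiv fun _ : Fin (r + 1) => Fin d)
      (fun x : Fin d × (Fin r → Fin d) =>
        cuntzWord ψ ((Fin.cons x.1 x.2 : Fin (r + 1) → Fin d) ∘ Sp) *
          star (cuntzWord ψ (Fin.cons x.1 x.2)))
      (fun L => cuntzWord ψ (L ∘ Sp) * star (cuntzWord ψ L))
      (fun x => rfl),
    Fintype.sum_prod_type]
  refine Finset.sum_congr rfl fun i _ => ?_
  rw [Finset.mul_sum, Finset.sum_mul]
  refine Finset.sum_congr rfl fun l _ => ?_
  simp only [key, hcons, star_mul]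
  simp [mul_assoc]
end

section
/- Let B be a unital C*-algebra, ψ₁, …, ψ_d a Cuntz family of order d in B with canonical endomorphism σ, and r ≥ 0. Let c_r denote the permutation of {1, …, r+1} defined by c_r(1) := r + 1 and c_r(i) := i − 1 for 2 ≤ i ≤ r + 1. Then for every multi-index J ∈ {1, …, d}^r one has σ(ψ_J) = θ(c_r) ψ_J. -/
lemma cuntzWord_cons {B : Type*} [CStarAlgebra B] {d : ℕ} (ψ : Fin d → B)
    {r : ℕ} (J : Fin (r + 1) → Fin d) :
    cuntzWord ψ J = ψ (J 0) * cuntzWord ψ (fun k => J k.succ) := by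
  simp [cuntzWord, List.ofFn_succ]

lemma cuntzWord_snoc {B : Type*} [CStarAlgebra B] {d : ℕ} (ψ : Fin d → B)
    {r : ℕ} (J : Fin (r + 1) → Fin d) :
    cuntzWord ψ J = cuntzWord ψ (J ∘ Fin.castSucc) * ψ (J (Fin.last r)) := by
  unfold cuntzWord
  rw [List.ofFn_succ' (fun k => ψ (J k)), List.prod_concat]
  rfl

lemma star_word_mul_word {B : Type*} [CStarAlgebra B] {d : ℕ} (ψ : Fin d → B)
    (hψ : IsCuntzFamily ψ) {r : ℕ} (l J : Fin r → Fin d) :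
    star (cuntzWord ψ l) * cuntzWord ψ J = if l = J then 1 else 0 := by
  induction r with
  | zero => simp [cuntzWord, Subsingleton.elim l J]
  | succ n ih =>
    rw [cuntzWord_cons ψ l, cuntzWord_cons ψ J, star_mul]
    have key : star (ψ (l 0)) * (ψ (J 0) * cuntzWord ψ (fun k => J k.succ))
        = (if l 0 = J 0 then (1:B) else 0) * cuntzWord ψ (fun k => J k.succ) := by
      rw [← mul_assoc, hψ.1]
    rw [mul_assoc, key]
    by_cases h0 : l 0 = J 0
    · rw [if_pos h0, one_mul, ih]
      by_cases h1 : (fun k : Fin n => l k.succ) = (fun k : Fin n => J k.succ)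
      · rw [if_pos h1, if_pos]
        funext k
        cases k using Fin.cases with
        | zero => exact h0
        | succ k => exact congrFun h1 k
      · rw [if_neg h1, if_neg]
        intro h; exact h1 (by funext k; exact congrFun h k.succ)
    · rw [if_neg h0, zero_mul, mul_zero, if_neg]
      intro h; exact h0 (congrFun h 0)

/-- **Words of length `r` are symmetry intertwiners.**
Let `ψ₁, …, ψ_d` be a Cuntz family of order `d` in a unital C*-algebra `B` with
canonical endomorphism `σ`, and `r ≥ 0`.  Let `c_r` be the cyclic permutation of
`{1, …, r+1}` sending the first letter to the last position (in zero-based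
indexing: `c_r 0 = r` and `c_r (i+1) = i`).  Then for every multi-index
`J ∈ {1, …, d}^r` one has `σ(ψ_J) = θ(c_r) ψ_J`. -/
theorem cuntzEndo_word_eq_cycle_mul_word {B : Type*} [CStarAlgebra B]
    {d : ℕ} (ψ : Fin d → B) (hψ : IsCuntzFamily ψ)
    {r : ℕ} (c : Equiv.Perm (Fin (r + 1)))
    (hc0 : c 0 = Fin.last r) (hc : ∀ i : Fin r, c i.succ = i.castSucc)
    (J : Fin r → Fin d) :
    cuntzEndo ψ (cuntzWord ψ J) = cuntzPermOp ψ c * cuntzWord ψ J := by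
  rw [cuntzPermOp, Finset.sum_mul]
  have term : ∀ l : Fin (r+1) → Fin d,
      cuntzWord ψ (l ∘ c) * star (cuntzWord ψ l) * cuntzWord ψ J =
      if l ∘ Fin.castSucc = J then
        ψ (l (Fin.last r)) * cuntzWord ψ J * star (ψ (l (Fin.last r))) else 0 := by
    intro l
    have h1 : cuntzWord ψ (l ∘ c) = ψ (l (Fin.last r)) * cuntzWord ψ (l ∘ Fin.castSucc) := by
      rw [cuntzWord_cons]
      congr 1
      · simp [Function.comp, hc0]
      · exact congrArg (cuntzWord ψ) (funext fun k => by simp [Function.comp, hc])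
    rw [h1, cuntzWord_snoc ψ l, star_mul, mul_assoc, mul_assoc, mul_assoc,
      star_word_mul_word ψ hψ]
    by_cases h : l ∘ Fin.castSucc = J
    · rw [if_pos h, if_pos h, mul_one, h, mul_assoc]
    · simp [h]
  rw [Finset.sum_congr rfl (fun l _ => term l),
    ← (Fin.snocEquiv (fun _ => Fin d)).sum_comp]
  rw [Fintype.sum_prod_type]
  have hcond : ∀ (x : Fin d) (m : Fin r → Fin d),
      (Fin.snocEquiv fun _ => Fin d) (x, m) ∘ Fin.castSucc = m := fun x m => by
    funext k; simp [Fin.snocEquiv]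
  simp only [hcond]
  simp [cuntzEndo, Finset.sum_ite_eq']
end

section
/- Let B be a unital complex C*-algebra and ψ₁, …, ψ_d a Cuntz family of order d in B with canonical endomorphism σ. Then the totally antisymmetric element S := (d!)^{-1/2} Σ_{p ∈ Sym(d)} sign(p) ψ_{p(1)} ψ_{p(2)} ⋯ ψ_{p(d)} satisfies the special conjugate identity S* σ(S) = (−1)^{d−1} d^{−1} · 1. -/
/-!
Write `S = (d!)^{-1/2} A` with `A = Σ_p sign p ψ_p`. In the expansion
`A* σ(A) = Σ_{q,p,i} sign q sign p ψ_q* ψ_i ψ_p ψ_i*`, orthogonality of words of equal length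
kills every term except `q = (i, p(1), …, p(d-1))`, which leaves `ψ_{p(d)} ψ_i*`. Since `q` is a
permutation, this forces `i = p(d)` and `q = p ∘ c⁻¹` for the cyclic rotation `c`, of sign
`(-1)^{d-1}`. What remains is `(-1)^{d-1} Σ_p ψ_{p(d)} ψ_{p(d)}* = (-1)^{d-1} (d-1)! · 1`,
and `(d-1)!/d! = 1/d`.
-/

open scoped Nat

section CuntzWord

variable {B : Type*} [CStarAlgebra B] {d : ℕ} {ψ : Fin d → B}

lemma cuntzWord_cons_s12 {r : ℕ} (i : Fin d) (J : Fin r → Fin d) :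
    cuntzWord ψ (Fin.cons i J) = ψ i * cuntzWord ψ J := by
  simp [cuntzWord, List.ofFn_succ]

lemma cuntzWord_eq_mul_last {r : ℕ} (J : Fin (r + 1) → Fin d) :
    cuntzWord ψ J = cuntzWord ψ (J ∘ Fin.castSucc) * ψ (J (Fin.last r)) := by
  rw [cuntzWord, cuntzWord, List.ofFn_succ', List.prod_concat]
  rfl

lemma star_cuntzWord_mul_cuntzWord
    (hψ : ∀ i j, star (ψ i) * ψ j = if i = j then (1 : B) else 0) {r : ℕ}
    (J K : Fin r → Fin d) :
    star (cuntzWord ψ J) * cuntzWord ψ K = if J = K then 1 else 0 := by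
  induction r with
  | zero => simp [cuntzWord, Subsingleton.elim J K]
  | succ r ih =>
    rw [← Fin.cons_self_tail J, ← Fin.cons_self_tail K, cuntzWord_cons_s12, cuntzWord_cons_s12,
      star_mul, mul_assoc, ← mul_assoc (star (ψ _)), hψ]
    simp only [Fin.cons_inj]
    by_cases h : J 0 = K 0
    · simp [h, ih]
    · simp [h]

lemma star_cuntzWord_mul_mul_cuntzWord
    (hψ : ∀ i j, star (ψ i) * ψ j = if i = j then (1 : B) else 0) {r : ℕ}
    (J K : Fin (r + 1) → Fin d) (i : Fin d) :
    star (cuntzWord ψ J) * (ψ i * cuntzWord ψ K) =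
      if J = Fin.cons i (K ∘ Fin.castSucc) then ψ (K (Fin.last r)) else 0 := by
  rw [cuntzWord_eq_mul_last K, ← mul_assoc (ψ i), ← cuntzWord_cons_s12, ← mul_assoc,
    star_cuntzWord_mul_cuntzWord hψ]
  split <;> simp

end CuntzWord

namespace Equiv.Perm

variable {n : ℕ}

lemma coe_mul_finRotate_inv (p : Perm (Fin (n + 1))) :
    ⇑(p * (finRotate (n + 1))⁻¹) = Fin.cons (p (Fin.last n)) (p ∘ Fin.castSucc) := by
  funext j
  refine Fin.cases ?_ (fun k => ?_) j
  · rw [mul_apply, inv_eq_iff_eq.2 finRotate_last.symm, Fin.cons_zero]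
  · rw [mul_apply, inv_eq_iff_eq.2 (by rw [finRotate_apply, Fin.coeSucc_eq_succ]),
      Fin.cons_succ, Function.comp_apply]

lemma coe_eq_cons_comp_castSucc_iff (p q : Perm (Fin (n + 1))) (i : Fin (n + 1)) :
    ⇑q = Fin.cons i (p ∘ Fin.castSucc) ↔
      q = p * (finRotate (n + 1))⁻¹ ∧ i = p (Fin.last n) := by
  constructor
  · intro hq
    have hi : i = p (Fin.last n) := by
      obtain ⟨j, hj⟩ := q.surjective (p (Fin.last n))
      rw [hq] at hj
      induction j using Fin.cases with
      | zero => rwa [Fin.cons_zero] at hj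
      | succ k => exact absurd (p.injective hj) (Fin.castSucc_lt_last k).ne
    refine ⟨DFunLike.coe_injective ?_, hi⟩
    rw [hq, coe_mul_finRotate_inv, hi]
  · rintro ⟨rfl, rfl⟩
    exact coe_mul_finRotate_inv p

lemma sign_mul_finRotate_inv (p : Perm (Fin (n + 1))) :
    sign (p * (finRotate (n + 1))⁻¹) = (-1) ^ n * sign p := by
  simp [sign_finRotate, mul_comm]

end Equiv.Perm

lemma Fin.sum_perm_apply {M : Type*} [AddCommMonoid M] {n : ℕ} (a : Fin (n + 1))
    (f : Fin (n + 1) → M) :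
    ∑ p : Equiv.Perm (Fin (n + 1)), f (p a) = n ! • ∑ i, f i := by
  calc ∑ p : Equiv.Perm (Fin (n + 1)), f (p a)
      = ∑ p : Equiv.Perm (Fin (n + 1)), f (p 0) :=
        Fintype.sum_equiv (Equiv.mulRight (Equiv.swap 0 a)) _ _ fun p => by simp
    _ = ∑ x : Fin (n + 1) × Equiv.Perm (Fin n), f x.1 :=
        (Fintype.sum_equiv Equiv.Perm.decomposeFin.symm _ _ fun _ =>
          by rw [Equiv.Perm.decomposeFin_symm_apply_zero]).symm
    _ = n ! • ∑ i, f i := by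
        simp [Fintype.sum_prod_type, Fintype.card_perm, Finset.smul_sum]

def cuntzAntisymm {B : Type*} [CStarAlgebra B] {d : ℕ} (ψ : Fin d → B) : B :=
  ∑ p : Equiv.Perm (Fin d), (Equiv.Perm.sign p : ℤ) • cuntzWord ψ ⇑p

section Antisymm

open Equiv.Perm

variable {B : Type*} [CStarAlgebra B]

lemma cuntzEndo_smul {R : Type*} [Monoid R] [DistribMulAction R B] [IsScalarTower R B B]
    [SMulCommClass R B B] {d : ℕ} (ψ : Fin d → B) (c : R) (b : B) :
    cuntzEndo ψ (c • b) = c • cuntzEndo ψ b := by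
  simp only [cuntzEndo, Finset.smul_sum, mul_smul_comm, smul_mul_assoc]

variable {n : ℕ} {ψ : Fin (n + 1) → B}

lemma star_cuntzAntisymm_mul_mul_cuntzWord
    (hψ : ∀ i j, star (ψ i) * ψ j = if i = j then (1 : B) else 0)
    (i : Fin (n + 1)) (p : Equiv.Perm (Fin (n + 1))) :
    star (cuntzAntisymm ψ) * (ψ i * cuntzWord ψ ⇑p) =
      if i = p (Fin.last n) then (sign (p * (finRotate (n + 1))⁻¹) : ℤ) • ψ i else 0 := by
  simp only [cuntzAntisymm, star_sum, star_zsmul, Finset.sum_mul, smul_mul_assoc,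
    star_cuntzWord_mul_mul_cuntzWord hψ, coe_eq_cons_comp_castSucc_iff, ite_and, smul_ite,
    smul_zero, Finset.sum_ite_eq', Finset.mem_univ, if_true]
  split_ifs with h <;> simp [h]

lemma star_cuntzAntisymm_mul_cuntzEndo (hψ : IsCuntzFamily ψ) :
    star (cuntzAntisymm ψ) * cuntzEndo ψ (cuntzAntisymm ψ) = ((-1) ^ n * n ! : ℤ) • 1 := by
  obtain ⟨hiso, hsum⟩ := hψ
  have hsign (p : Equiv.Perm (Fin (n + 1))) :
      (sign p : ℤ) * sign (p * (finRotate (n + 1))⁻¹) = (-1) ^ n := by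
    rw [sign_mul_finRotate_inv, ← Units.val_mul, mul_left_comm, Int.units_mul_self, mul_one,
      Units.val_pow_eq_pow_val, Units.val_neg, Units.val_one]
  calc star (cuntzAntisymm ψ) * cuntzEndo ψ (cuntzAntisymm ψ)
      = ∑ p : Equiv.Perm (Fin (n + 1)), ∑ i, (sign p : ℤ) •
          (star (cuntzAntisymm ψ) * (ψ i * cuntzWord ψ ⇑p) * star (ψ i)) := by
        simp only [cuntzEndo, cuntzAntisymm, Finset.mul_sum, Finset.sum_mul, mul_smul_comm,
          smul_mul_assoc, mul_assoc]
        exact Finset.sum_comm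
    _ = ∑ p : Equiv.Perm (Fin (n + 1)), ((-1) ^ n : ℤ) •
          (ψ (p (Fin.last n)) * star (ψ (p (Fin.last n)))) := by
        simp only [star_cuntzAntisymm_mul_mul_cuntzWord hiso, ite_mul, zero_mul, smul_ite,
          smul_zero, Finset.sum_ite_eq', Finset.mem_univ, if_true, smul_mul_assoc, smul_smul,
          hsign]
    _ = ((-1) ^ n * n ! : ℤ) • 1 := by
        rw [← Finset.smul_sum, Fin.sum_perm_apply (Fin.last n) fun j => ψ j * star (ψ j), hsum,
          mul_smul, natCast_zsmul]

end Antisymm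

/-- **The special conjugate identity.**
Let `ψ₁, …, ψ_d` be a Cuntz family of order `d` in a unital complex C*-algebra
`B` with canonical endomorphism `σ`.  Then the totally antisymmetric element
`S := (d!)^{-1/2} Σ_{p ∈ Sym(d)} sign(p) ψ_{p(1)} ⋯ ψ_{p(d)}` satisfies
`S* σ(S) = (−1)^{d−1} d^{−1} · 1`. -/
theorem antisymmetric_special_conjugate_identity {B : Type*} [CStarAlgebra B]
    {d : ℕ} (ψ : Fin d → B) (hψ : IsCuntzFamily ψ)
    (S : B)
    (hS : S = (Real.sqrt (Nat.factorial d))⁻¹ •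
      ∑ p : Equiv.Perm (Fin d), (Equiv.Perm.sign p : ℤ) • cuntzWord ψ ⇑p) :
    star S * cuntzEndo ψ S = ((-1 : ℝ) ^ (d - 1) * (d : ℝ)⁻¹) • (1 : B) := by
  obtain _ | n := d
  · -- both sides vanish: `σ` is an empty sum and `(0 : ℝ)⁻¹ = 0`
    simp [cuntzEndo]
  change S = _ • cuntzAntisymm ψ at hS
  rw [hS, star_smul, star_trivial, cuntzEndo_smul, smul_mul_smul_comm,
    star_cuntzAntisymm_mul_cuntzEndo hψ, ← Int.cast_smul_eq_zsmul ℝ, smul_smul]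
  congr 1
  rw [← mul_inv, Real.mul_self_sqrt (by positivity), Nat.factorial_succ, Nat.add_sub_cancel]
  push_cast
  field_simp
end

section
/- Let B be a unital complex C*-algebra and ψ₁, …, ψ_d a Cuntz family of order d in B. Then the totally antisymmetric element S := (d!)^{-1/2} Σ_{p ∈ Sym(d)} sign(p) ψ_{p(1)} ψ_{p(2)} ⋯ ψ_{p(d)} satisfies S S* = (1/d!) Σ_{p ∈ Sym(d)} sign(p) θ(p), and this element is a self-adjoint idempotent (a projection). -/
section Aux

open Finset Equiv Equiv.Perm

variable {B : Type*} [CStarAlgebra B] {d : ℕ} {ψ : Fin d → B}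

lemma cuntzWord_succ (ψ : Fin d → B) {r : ℕ} (J : Fin (r+1) → Fin d) :
    cuntzWord ψ J = ψ (J 0) * cuntzWord ψ (J ∘ Fin.succ) := by
  simp [cuntzWord, List.ofFn_succ, Function.comp]

lemma star_cuntzWord_mul (hψ : IsCuntzFamily ψ) :
    ∀ {r : ℕ} (J K : Fin r → Fin d),
      star (cuntzWord ψ J) * cuntzWord ψ K = if J = K then 1 else 0 := by
  intro r
  induction r with
  | zero =>
    intro J K
    simp [cuntzWord, Subsingleton.elim J K]
  | succ r ih =>
    intro J K
    rw [cuntzWord_succ ψ J, cuntzWord_succ ψ K, star_mul]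
    have : star (cuntzWord ψ (J ∘ Fin.succ)) * star (ψ (J 0)) *
        (ψ (K 0) * cuntzWord ψ (K ∘ Fin.succ))
        = star (cuntzWord ψ (J ∘ Fin.succ)) * ((star (ψ (J 0)) * ψ (K 0)) *
          cuntzWord ψ (K ∘ Fin.succ)) := by
      simp only [mul_assoc]
    rw [this, hψ.1]
    by_cases h0 : J 0 = K 0
    · rw [if_pos h0, one_mul, ih]
      by_cases hs : J ∘ Fin.succ = K ∘ Fin.succ
      · rw [if_pos hs, if_pos]
        funext k
        refine Fin.cases ?_ ?_ k
        · exact h0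
        · intro i; exact congrFun hs i
      · rw [if_neg hs, if_neg]
        intro h; exact hs (by funext i; exact congrFun h i.succ)
    · rw [if_neg h0, zero_mul, mul_zero, if_neg]
      intro h; exact h0 (congrFun h 0)

/-- The antisymmetrized sum over words with a non-injective index vanishes. -/
lemma antisym_noninj (ψ : Fin d → B) (l : Fin d → Fin d) (hl : ¬ Function.Injective l) :
    ∑ p : Perm (Fin d), (Perm.sign p : ℤ) • cuntzWord ψ (l ∘ ⇑p) = 0 := by
  set F := ∑ p : Perm (Fin d), (Perm.sign p : ℤ) • cuntzWord ψ (l ∘ ⇑p) with hF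
  simp only [Function.Injective, not_forall] at hl
  obtain ⟨i, j, hij, hne⟩ := hl
  set τ := Equiv.swap i j with hτ
  have hlτ : l ∘ ⇑τ = l := by
    funext k
    rcases eq_or_ne k i with rfl | hki
    · simp [hτ, Equiv.swap_apply_left, hij]
    rcases eq_or_ne k j with rfl | hkj
    · simp [hτ, Equiv.swap_apply_right, hij]
    · simp [hτ, Equiv.swap_apply_of_ne_of_ne hki hkj]
  have key : F = -F := by
    calc F = ∑ p : Perm (Fin d), (Perm.sign (τ * p) : ℤ) • cuntzWord ψ (l ∘ ⇑(τ * p)) := by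
          rw [hF]
          exact (Fintype.sum_equiv (Equiv.mulLeft τ) _ _ (fun p => rfl)).symm
      _ = -F := by
          rw [hF, ← Finset.sum_neg_distrib]
          refine Finset.sum_congr rfl fun p _ => ?_
          have h1 : (Perm.sign (τ * p) : ℤ) = -(Perm.sign p : ℤ) := by
            have : Perm.sign (τ * p) = Perm.sign τ * Perm.sign p := map_mul _ _ _
            rw [this, hτ, Perm.sign_swap hne]
            push_cast
            ring
          have h2 : l ∘ ⇑(τ * p) = l ∘ ⇑p := by
            rw [Perm.coe_mul, ← Function.comp_assoc, hlτ]
          rw [h1, h2, neg_smul]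
  have h2 : (2 : ℂ) • F = 0 := by
    rw [two_smul]
    nth_rewrite 1 [key]
    exact neg_add_cancel F
  exact (smul_eq_zero.mp h2).resolve_left (by norm_num)

/-- Reindexing the antisymmetrized sum along a permutation. -/
lemma antisym_perm (ψ : Fin d → B) (σ : Perm (Fin d)) :
    ∑ p : Perm (Fin d), (Perm.sign p : ℤ) • cuntzWord ψ (⇑σ ∘ ⇑p)
      = (Perm.sign σ : ℤ) • ∑ q : Perm (Fin d), (Perm.sign q : ℤ) • cuntzWord ψ ⇑q := by
  rw [Finset.smul_sum]
  refine (Fintype.sum_equiv (Equiv.mulLeft σ⁻¹) _ _ fun q => ?_).symm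
  have h1 : ⇑σ ∘ ⇑(σ⁻¹ * q) = ⇑q := by
    rw [Perm.coe_mul, ← Function.comp_assoc, ← Perm.coe_mul, mul_inv_cancel]
    simp
  have h2 : (Perm.sign (σ⁻¹ * q) : ℤ) = (Perm.sign σ : ℤ) * (Perm.sign q : ℤ) := by
    have : Perm.sign (σ⁻¹ * q) = Perm.sign σ⁻¹ * Perm.sign q := map_mul _ _ _
    rw [this, Perm.sign_inv]
    push_cast
    ring
  rw [Equiv.coe_mulLeft, h1, h2, mul_smul]

/-- A sum over all multi-indices supported on injective indices reduces
to a sum over permutations. -/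
lemma sum_fun_eq_sum_perm (g : (Fin d → Fin d) → B)
    (hg : ∀ l, ¬ Function.Injective l → g l = 0) :
    ∑ l : Fin d → Fin d, g l = ∑ σ : Perm (Fin d), g ⇑σ := by
  classical
  have hinj : Function.Injective (fun σ : Perm (Fin d) => ⇑σ) :=
    fun _ _ h => Equiv.coe_fn_injective h
  have h1 : ∑ σ : Perm (Fin d), g ⇑σ
      = ∑ l ∈ Finset.image (fun σ : Perm (Fin d) => ⇑σ) Finset.univ, g l :=
    (Finset.sum_image fun x _ y _ h => hinj h).symm
  rw [h1]
  refine (Finset.sum_subset (Finset.subset_univ _) fun l _ hl => ?_).symm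
  refine hg l fun hinjl => hl ?_
  have hbij : Function.Bijective l := Finite.injective_iff_bijective.mp hinjl
  exact Finset.mem_image.mpr ⟨Equiv.ofBijective l hbij, Finset.mem_univ _, rfl⟩

/-- `T* T = d! ⬝ 1` for the totally antisymmetric element numerator. -/
lemma starT_mul_T (hψ : IsCuntzFamily ψ) :
    star (∑ p : Perm (Fin d), (Perm.sign p : ℤ) • cuntzWord ψ ⇑p) *
      (∑ p : Perm (Fin d), (Perm.sign p : ℤ) • cuntzWord ψ ⇑p)
      = (d.factorial : ℕ) • (1 : B) := by
  rw [star_sum]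
  simp only [star_zsmul]
  rw [Finset.sum_mul_sum]
  have : ∀ p q : Perm (Fin d),
      ((Perm.sign p : ℤ) • star (cuntzWord ψ ⇑p)) * ((Perm.sign q : ℤ) • cuntzWord ψ ⇑q)
        = ((Perm.sign p : ℤ) * (Perm.sign q : ℤ)) •
          (if p = q then (1 : B) else 0) := by
    intro p q
    rw [smul_mul_assoc, mul_smul_comm, smul_smul, star_cuntzWord_mul hψ]
    congr 1
    by_cases h : p = q
    · rw [if_pos h, if_pos (by rw [h])]
    · rw [if_neg h, if_neg fun hc => h (Equiv.coe_fn_injective hc)]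
  simp only [this]
  have h2 : ∀ p : Perm (Fin d),
      ∑ q : Perm (Fin d), ((Perm.sign p : ℤ) * (Perm.sign q : ℤ)) •
        (if p = q then (1 : B) else 0) = (1 : B) := by
    intro p
    rw [Finset.sum_eq_single p]
    · have : ((Perm.sign p : ℤ) * (Perm.sign p : ℤ)) = 1 := by
        rcases Int.units_eq_one_or (Perm.sign p) with h | h <;> simp [h]
      rw [if_pos rfl, this, one_smul]
    · intro q _ hq
      rw [if_neg (Ne.symm hq), smul_zero]
    · intro h; exact absurd (Finset.mem_univ p) h
  simp only [h2]
  rw [Finset.sum_const, Finset.card_univ, Fintype.card_perm, Fintype.card_fin]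

end Aux

/-- **The range projection of the totally antisymmetric element.**
Let `ψ₁, …, ψ_d` be a Cuntz family of order `d` in a unital complex C*-algebra
`B`.  Then the totally antisymmetric element
`S := (d!)^{-1/2} Σ_{p ∈ Sym(d)} sign(p) ψ_{p(1)} ⋯ ψ_{p(d)}` satisfies
`S S* = (1/d!) Σ_{p ∈ Sym(d)} sign(p) θ(p)`, and this element is a self-adjoint
idempotent (a projection). -/
theorem antisymmetric_range_projection {B : Type*} [CStarAlgebra B]
    {d : ℕ} (ψ : Fin d → B) (hψ : IsCuntzFamily ψ)
    (S P : B)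
    (hS : S = (Real.sqrt (Nat.factorial d))⁻¹ •
      ∑ p : Equiv.Perm (Fin d), (Equiv.Perm.sign p : ℤ) • cuntzWord ψ ⇑p)
    (hP : P = ((Nat.factorial d : ℝ))⁻¹ •
      ∑ p : Equiv.Perm (Fin d), (Equiv.Perm.sign p : ℤ) • cuntzPermOp ψ p) :
    S * star S = P ∧ star P = P ∧ P * P = P := by
  classical
  set T : B := ∑ p : Equiv.Perm (Fin d), (Equiv.Perm.sign p : ℤ) • cuntzWord ψ ⇑p with hT
  set c : ℝ := (Real.sqrt (Nat.factorial d))⁻¹ with hc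
  have hfacpos : (0 : ℝ) < (d.factorial : ℝ) := by
    exact_mod_cast Nat.factorial_pos d
  have hcc : c * c = ((d.factorial : ℝ))⁻¹ := by
    rw [hc, ← mul_inv]
    rw [Real.mul_self_sqrt (by positivity)]
  have hstarS : star S = c • star T := by
    rw [hS, star_smul, star_trivial]
  -- S S* = (d!)⁻¹ • (T T*)
  have hSS : S * star S = ((d.factorial : ℝ))⁻¹ • (T * star T) := by
    rw [hS, star_smul, star_trivial, smul_mul_assoc, mul_smul_comm, smul_smul, hcc]
  -- P = (d!)⁻¹ • (T T*)
  have hPT : P = ((d.factorial : ℝ))⁻¹ • (T * star T) := by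
    rw [hP]
    congr 1
    have step1 : ∑ p : Equiv.Perm (Fin d), (Equiv.Perm.sign p : ℤ) • cuntzPermOp ψ p
        = ∑ l : Fin d → Fin d,
            (∑ p : Equiv.Perm (Fin d), (Equiv.Perm.sign p : ℤ) • cuntzWord ψ (l ∘ ⇑p)) *
              star (cuntzWord ψ l) := by
      unfold cuntzPermOp
      simp only [Finset.smul_sum]
      rw [Finset.sum_comm]
      refine Finset.sum_congr rfl fun l _ => ?_
      rw [Finset.sum_mul]
      refine Finset.sum_congr rfl fun p _ => ?_
      rw [smul_mul_assoc]
    rw [step1, sum_fun_eq_sum_perm _ (fun l hl => by rw [antisym_noninj ψ l hl, zero_mul])]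
    calc ∑ σ : Equiv.Perm (Fin d),
          (∑ p : Equiv.Perm (Fin d), (Equiv.Perm.sign p : ℤ) • cuntzWord ψ (⇑σ ∘ ⇑p)) *
            star (cuntzWord ψ ⇑σ)
        = ∑ σ : Equiv.Perm (Fin d),
            ((Equiv.Perm.sign σ : ℤ) • T) * star (cuntzWord ψ ⇑σ) := by
          refine Finset.sum_congr rfl fun σ _ => ?_
          rw [antisym_perm ψ σ, ← hT]
      _ = ∑ σ : Equiv.Perm (Fin d),
            T * ((Equiv.Perm.sign σ : ℤ) • star (cuntzWord ψ ⇑σ)) := by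
          refine Finset.sum_congr rfl fun σ _ => ?_
          rw [smul_mul_assoc, mul_smul_comm]
      _ = T * ∑ σ : Equiv.Perm (Fin d),
            (Equiv.Perm.sign σ : ℤ) • star (cuntzWord ψ ⇑σ) := (Finset.mul_sum _ _ _).symm
      _ = T * star T := by
          rw [hT, star_sum]
          simp only [star_zsmul]
  have hPS : P = S * star S := (hSS.trans hPT.symm).symm
  have hTS1 : star S * S = 1 := by
    rw [hS, star_smul, star_trivial, smul_mul_assoc, mul_smul_comm, smul_smul, hcc, hT,
      starT_mul_T hψ, ← Nat.cast_smul_eq_nsmul ℝ, smul_smul, inv_mul_cancel₀ hfacpos.ne',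
      one_smul]
  refine ⟨hPS.symm, ?_, ?_⟩
  · rw [hPS, star_mul, star_star]
  · rw [hPS]
    rw [show (S * star S) * (S * star S) = S * ((star S * S) * star S) from by
      simp only [mul_assoc], hTS1, one_mul]
end

section
/- Let B be a unital C*-algebra, A ⊆ B a unital C*-subalgebra, and ρ : A → A a unital *-homomorphism. Suppose ψ₁, …, ψ_d ∈ B satisfy Σᵢ ψᵢ ψᵢ* = 1 and ψᵢ a = ρ(a) ψᵢ for all a ∈ A and all i; suppose further that A′ ∩ B ⊆ A and that B is generated as a C*-algebra by A together with {ψ₁, …, ψ_d}. Then the center of B equals {z ∈ A′ ∩ B : ρ(z) = z}. -/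
/-- **The center of the crossed product.**
Let `B` be a unital C*-algebra, `A ⊆ B` a unital C*-subalgebra, and
`ρ : A → A` a unital *-homomorphism.  Suppose `ψ₁, …, ψ_d ∈ B` satisfy
`Σᵢ ψᵢ ψᵢ* = 1` and `ψᵢ a = ρ(a) ψᵢ` for all `a ∈ A`; suppose further that
`A′ ∩ B ⊆ A` and that `B` is generated as a C*-algebra by `A` together with the
`ψᵢ`.  Then the center of `B` equals `{z ∈ A′ ∩ B : ρ(z) = z}`. -/
theorem center_of_crossed_product {B : Type*} [CStarAlgebra B]
    (A : StarSubalgebra ℂ B) (hA : IsClosed (A : Set B))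
    (ρ : A →⋆ₐ[ℂ] A)
    {d : ℕ} (ψ : Fin d → B)
    (hψ1 : ∑ i, ψ i * star (ψ i) = 1)
    (hψρ : ∀ (a : A) (i : Fin d), ψ i * (a : B) = (ρ a : B) * ψ i)
    (hrc : ∀ b : B, (∀ a ∈ A, b * a = a * b) → b ∈ A)
    (hgen : (StarAlgebra.adjoin ℂ ((A : Set B) ∪ Set.range ψ)).topologicalClosure = ⊤) :
    {z : B | ∀ b : B, z * b = b * z} =
      {z : B | ∃ hz : z ∈ A, (∀ a ∈ A, z * a = a * z) ∧ (ρ ⟨z, hz⟩ : B) = z} := by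
  ext z
  simp only [Set.mem_setOf_eq]
  constructor
  · intro hz
    have hcomm : ∀ a ∈ A, z * a = a * z := fun a _ => hz a
    have hzA : z ∈ A := hrc z hcomm
    refine ⟨hzA, hcomm, ?_⟩
    -- (ρ z - z) * ψ i = 0 for all i
    have key : ∀ i, ((ρ ⟨z, hzA⟩ : B) - z) * ψ i = 0 := by
      intro i
      have h1 : ψ i * z = (ρ ⟨z, hzA⟩ : B) * ψ i := hψρ ⟨z, hzA⟩ i
      have h2 : ψ i * z = z * ψ i := (hz (ψ i)).symm
      rw [sub_mul, ← h1, h2, sub_self]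
    have : ((ρ ⟨z, hzA⟩ : B) - z) * (∑ i, ψ i * star (ψ i)) = 0 := by
      rw [Finset.mul_sum]
      refine Finset.sum_eq_zero fun i _ => ?_
      rw [← mul_assoc, key i, zero_mul]
    rw [hψ1, mul_one, sub_eq_zero] at this
    exact this
  · rintro ⟨hzA, hcomm, hρz⟩ b
    -- z and star z commute with every generator, hence with all of B.
    have hzstarA : star z ∈ A := star_mem hzA
    have hstarcomm : ∀ a ∈ A, star z * a = a * star z := by
      intro a ha
      have := hcomm (star a) (star_mem ha)
      calc star z * a = star (star a * z) := by simp
        _ = star (z * star a) := by rw [← this]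
        _ = a * star z := by simp
    have hρstar : (ρ ⟨star z, hzstarA⟩ : B) = star z := by
      have : (⟨star z, hzstarA⟩ : A) = star (⟨z, hzA⟩ : A) := rfl
      rw [this, map_star]
      show star ((ρ ⟨z, hzA⟩ : A) : B) = star z
      rw [hρz]
    -- The centralizer of {z} as a star subalgebra
    set C : StarSubalgebra ℂ B := StarSubalgebra.centralizer ℂ {z} with hC
    have memC : ∀ x : B, x ∈ C ↔ z * x = x * z ∧ star z * x = x * star z := by
      intro x
      rw [hC, StarSubalgebra.mem_centralizer_iff]
      simp
    have hCclosed : IsClosed (C : Set B) := by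
      have : (C : Set B) = {x | z * x = x * z} ∩ {x | star z * x = x * star z} := by
        ext x
        simp only [SetLike.mem_coe, Set.mem_inter_iff, Set.mem_setOf_eq]
        exact memC x
      rw [this]
      exact (isClosed_eq (continuous_const.mul continuous_id)
        (continuous_id.mul continuous_const)).inter
        (isClosed_eq (continuous_const.mul continuous_id)
        (continuous_id.mul continuous_const))
    have hgenC : (A : Set B) ∪ Set.range ψ ⊆ (C : Set B) := by
      rintro x (hx | ⟨i, rfl⟩)
      · rw [SetLike.mem_coe, memC]
        exact ⟨(hcomm x hx).symm ▸ (hcomm x hx), hstarcomm x hx⟩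
      · rw [SetLike.mem_coe, memC]
        constructor
        · have h1 : ψ i * z = (ρ ⟨z, hzA⟩ : B) * ψ i := hψρ ⟨z, hzA⟩ i
          rw [hρz] at h1
          exact h1.symm
        · have h1 : ψ i * star z = (ρ ⟨star z, hzstarA⟩ : B) * ψ i := hψρ ⟨star z, hzstarA⟩ i
          rw [hρstar] at h1
          exact h1.symm
    have hle : StarAlgebra.adjoin ℂ ((A : Set B) ∪ Set.range ψ) ≤ C :=
      StarAlgebra.adjoin_le hgenC
    have htop : (⊤ : StarSubalgebra ℂ B) ≤ C := by
      rw [← hgen]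
      exact StarSubalgebra.topologicalClosure_minimal hle hCclosed
    have hbC : b ∈ C := htop (by trivial)
    exact ((memC b).mp hbC).1
end

section
/- Let B be a unital C*-algebra and ψ₁, …, ψ_d a Cuntz family of order d in B with canonical endomorphism σ. Then {ψ ∈ B : ψ b = σ(b) ψ for all b ∈ B} = {Σᵢ₌₁^d ψᵢ cᵢ : c₁, …, c_d ∈ Z(B)}, where Z(B) denotes the center of B. Moreover, for any ψ in this set the coefficients are uniquely determined by cᵢ = ψᵢ* ψ. -/
/-- Extracting a coefficient: `ψᵢ* (Σⱼ ψⱼ xⱼ) = xᵢ`. -/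
lemma cuntz_extract {B : Type*} [CStarAlgebra B] {d : ℕ} {ψ : Fin d → B}
    (hψ : IsCuntzFamily ψ) (x : Fin d → B) (i : Fin d) :
    star (ψ i) * ∑ j, ψ j * x j = x i := by
  rw [Finset.mul_sum]
  have : ∀ j, star (ψ i) * (ψ j * x j) = if i = j then x j else 0 := by
    intro j
    rw [← mul_assoc, hψ.1 i j]
    split <;> simp
  simp only [this]
  simp

/-- **Characterization of the intertwiner space `(ι, σ)`.**
Let `ψ₁, …, ψ_d` be a Cuntz family of order `d` in a unital C*-algebra `B` with
canonical endomorphism `σ`.  Then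
`{ψ ∈ B : ψ b = σ(b) ψ for all b} = {Σᵢ ψᵢ cᵢ : cᵢ ∈ Z(B)}`, and for any `ψ`
in this set the coefficients are uniquely determined: `cᵢ = ψᵢ* ψ`. -/
theorem intertwiners_iota_sigma {B : Type*} [CStarAlgebra B]
    {d : ℕ} (ψ : Fin d → B) (hψ : IsCuntzFamily ψ) :
    ({φ : B | ∀ b : B, φ * b = cuntzEndo ψ b * φ} =
      {φ : B | ∃ c : Fin d → B, (∀ i, ∀ b : B, c i * b = b * c i) ∧
        φ = ∑ i, ψ i * c i}) ∧
    (∀ φ : B, (∀ b : B, φ * b = cuntzEndo ψ b * φ) →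
      ∀ c : Fin d → B, (∀ i, ∀ b : B, c i * b = b * c i) →
        φ = ∑ i, ψ i * c i → ∀ i, c i = star (ψ i) * φ) := by
  have hstar : ∀ (i : Fin d) (b : B),
      star (ψ i) * cuntzEndo ψ b = b * star (ψ i) := by
    intro i b
    have := cuntz_extract hψ (fun j => b * star (ψ j)) i
    simpa [cuntzEndo, mul_assoc] using this
  constructor
  · ext φ
    simp only [Set.mem_setOf_eq]
    constructor
    · intro hφ
      refine ⟨fun i => star (ψ i) * φ, ?_, ?_⟩
      · intro i b
        calc star (ψ i) * φ * b = star (ψ i) * (φ * b) := by rw [mul_assoc]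
          _ = star (ψ i) * (cuntzEndo ψ b * φ) := by rw [hφ b]
          _ = star (ψ i) * cuntzEndo ψ b * φ := by rw [mul_assoc]
          _ = b * star (ψ i) * φ := by rw [hstar]
          _ = b * (star (ψ i) * φ) := by rw [mul_assoc]
      · calc φ = 1 * φ := (one_mul φ).symm
          _ = (∑ i, ψ i * star (ψ i)) * φ := by rw [hψ.2]
          _ = ∑ i, ψ i * (star (ψ i) * φ) := by
              rw [Finset.sum_mul]; simp [mul_assoc]
    · rintro ⟨c, hc, rfl⟩ b
      rw [Finset.sum_mul]
      have lhs : ∀ i, ψ i * c i * b = ψ i * b * c i := by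
        intro i; rw [mul_assoc, hc i b, ← mul_assoc]
      simp only [lhs]
      rw [cuntzEndo, Finset.sum_mul]
      congr 1; ext i
      rw [Finset.mul_sum]
      have : ∀ j, ψ i * b * star (ψ i) * (ψ j * c j)
          = if i = j then ψ i * b * c j else 0 := by
        intro j
        rw [mul_assoc (ψ i * b) (star (ψ i)) (ψ j * c j), ← mul_assoc (star (ψ i)), hψ.1 i j]
        split <;> simp [mul_assoc]
      simp only [this]
      simp
  · intro φ _ c hc hφ i
    rw [hφ, cuntz_extract hψ c i]
end
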